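/- For a finite probability distribution over joint values of variables W, X, Y, Z and potential outcomes satisfying: (i) consistency/composition equalities P(y,z,w,x) = P(y_z ∧ z_w ∧ w_x ∧ x), P(w,x) = P(w_x ∧ x), P(z,w,x) = P(z_w ∧ w_x ∧ x); and (ii) counterfactual independence of {Y_z, W_x} from {Z_w} and from {X}, and of each of these sets from each other (i.e., P factorizes as P(y_z ∧ z_w ∧ w_x ∧ x) = P(y_z ∧ w_x)·P(z_w)·P(x), P(z_w ∧ w_x ∧ x) = P(z_w)·P(w_x)·P(x), P(w_x ∧ x) = P(w_x)·P(x)); then, assuming all conditioning events have positive probability, Σ_w P(y | z, w, x)·P(w | x) = P(y_z), and in particular the left-hand side does not depend on x. -/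
import Mathlib


open scoped Classical

/-- Probability of an event for a finitely supported distribution. -/
noncomputable def PrOf {Ω : Type*} (μ : Ω → ℝ) (A : Set Ω) : ℝ :=
  ∑ᶠ ω, if ω ∈ A then μ ω else 0

/-- The Verma constraint: given the consistency/composition identities and the
counterfactual independencies of the graph `X → W → Z → Y` with `W ↔ Y`
confounded, `Σ_w P(y | z, w, x) · P(w | x) = P(y_z)`; in particular the
left-hand side does not depend functionally on `x`. -/
theorem stmt17 {Ω ValW ValX ValY ValZ : Type} [Finite Ω] [Fintype ValW]
    (μ : Ω → ℝ) (hnn : ∀ ω, 0 ≤ μ ω) (hsum : ∑ᶠ ω, μ ω = 1)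
    (Wv : Ω → ValW) (Xv : Ω → ValX) (Yv : Ω → ValY) (Zv : Ω → ValZ)
    (Ypo : ValZ → Ω → ValY) (Zpo : ValW → Ω → ValZ) (Wpo : ValX → Ω → ValW)
    -- (i) consistency / composition identities
    (hc1 : ∀ y z w x,
      PrOf μ {ω | Yv ω = y ∧ Zv ω = z ∧ Wv ω = w ∧ Xv ω = x} =
      PrOf μ {ω | Ypo z ω = y ∧ Zpo w ω = z ∧ Wpo x ω = w ∧ Xv ω = x})
    (hc2 : ∀ w x,
      PrOf μ {ω | Wv ω = w ∧ Xv ω = x} =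
      PrOf μ {ω | Wpo x ω = w ∧ Xv ω = x})
    (hc3 : ∀ z w x,
      PrOf μ {ω | Zv ω = z ∧ Wv ω = w ∧ Xv ω = x} =
      PrOf μ {ω | Zpo w ω = z ∧ Wpo x ω = w ∧ Xv ω = x})
    -- (ii) counterfactual independencies
    (hf1 : ∀ y z w x,
      PrOf μ {ω | Ypo z ω = y ∧ Zpo w ω = z ∧ Wpo x ω = w ∧ Xv ω = x} =
      PrOf μ {ω | Ypo z ω = y ∧ Wpo x ω = w} * PrOf μ {ω | Zpo w ω = z} *
        PrOf μ {ω | Xv ω = x})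
    (hf2 : ∀ z w x,
      PrOf μ {ω | Zpo w ω = z ∧ Wpo x ω = w ∧ Xv ω = x} =
      PrOf μ {ω | Zpo w ω = z} * PrOf μ {ω | Wpo x ω = w} *
        PrOf μ {ω | Xv ω = x})
    (hf3 : ∀ w x,
      PrOf μ {ω | Wpo x ω = w ∧ Xv ω = x} =
      PrOf μ {ω | Wpo x ω = w} * PrOf μ {ω | Xv ω = x})
    -- positivity of the conditioning events
    (hpos1 : ∀ z w x, 0 < PrOf μ {ω | Zv ω = z ∧ Wv ω = w ∧ Xv ω = x})
    (hpos2 : ∀ x, 0 < PrOf μ {ω | Xv ω = x}) :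
    ∀ x z y,
      (∑ w : ValW,
        (PrOf μ {ω | Yv ω = y ∧ Zv ω = z ∧ Wv ω = w ∧ Xv ω = x} /
            PrOf μ {ω | Zv ω = z ∧ Wv ω = w ∧ Xv ω = x}) *
          (PrOf μ {ω | Wv ω = w ∧ Xv ω = x} / PrOf μ {ω | Xv ω = x})) =
      PrOf μ {ω | Ypo z ω = y} := by
  have := Fintype.ofFinite Ω
  have prnn : ∀ A : Set Ω, 0 ≤ PrOf μ A := by
    intro A
    rw [PrOf, finsum_eq_sum_of_fintype]
    exact Finset.sum_nonneg (fun ω _ => by split <;> simp [hnn ω])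
  intro x z y
  have hterm : ∀ w : ValW,
      (PrOf μ {ω | Yv ω = y ∧ Zv ω = z ∧ Wv ω = w ∧ Xv ω = x} /
          PrOf μ {ω | Zv ω = z ∧ Wv ω = w ∧ Xv ω = x}) *
        (PrOf μ {ω | Wv ω = w ∧ Xv ω = x} / PrOf μ {ω | Xv ω = x}) =
      PrOf μ {ω | Ypo z ω = y ∧ Wpo x ω = w} := by
    intro w
    have hpos := hpos1 z w x
    rw [hc3, hf2] at hpos
    have hs : 0 < PrOf μ {ω | Zpo w ω = z} := by
      nlinarith [prnn {ω | Zpo w ω = z}, prnn {ω | Wpo x ω = w}, prnn {ω | Xv ω = x},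
        mul_nonneg (prnn {ω | Wpo x ω = w}) (prnn {ω | Xv ω = x})]
    have ht : 0 < PrOf μ {ω | Wpo x ω = w} := by
      nlinarith [prnn {ω | Zpo w ω = z}, prnn {ω | Wpo x ω = w}, prnn {ω | Xv ω = x},
        mul_nonneg (prnn {ω | Zpo w ω = z}) (prnn {ω | Xv ω = x})]
    have hu : 0 < PrOf μ {ω | Xv ω = x} := hpos2 x
    rw [hc1, hf1, hc3, hf2, hc2, hf3]
    field_simp
  rw [Finset.sum_congr rfl (fun w _ => hterm w)]
  have : ∀ w : ValW, PrOf μ {ω | Ypo z ω = y ∧ Wpo x ω = w} =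
      ∑ ω, if Ypo z ω = y ∧ Wpo x ω = w then μ ω else 0 := by
    intro w; rw [PrOf, finsum_eq_sum_of_fintype]
    exact Finset.sum_congr rfl fun ω _ => by split_ifs with h1 h2 <;> first | rfl | tauto
  simp_rw [this]
  rw [Finset.sum_comm, PrOf, finsum_eq_sum_of_fintype]
  refine Finset.sum_congr rfl (fun ω _ => ?_)
  by_cases hy : Ypo z ω = y
  · simp [hy]
  · simp [hy]
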